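/- arXiv:2309.01349 — 2 statements merged into one kernel-verified Lean document; each statement's English description precedes it below -/
import Mathlib

section
/- For a lattice-linear homomorphism φ : SO → ℝ, one has φ(1) > 0 if and only if there exist x ∈ [0,∞) and c > 0 such that φ(f) = c · f(x) for all f ∈ SO. -/
open Filter Metric Set

noncomputable section

/-- A continuous function on the half-line `[0,∞)` (modeled as `ℝ≥0`) is
slowly oscillating if for every `R > 0` and `ε > 0` there is `M > 0` with
`diam f([x, x+R]) < ε` for all `x > M`. -/
def SO (f : NNReal → ℝ) : Prop :=
  Continuous f ∧ ∀ R : NNReal, 0 < R → ∀ ε : ℝ, 0 < ε → ∃ M : NNReal, 0 < M ∧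
    ∀ x : NNReal, M < x → Metric.diam (f '' Set.Icc x (x + R)) < ε

/-- A lattice-linear homomorphism of the vector lattice `SO`, encoded as a
function on all of `NNReal → ℝ` whose homomorphism properties are required on
slowly oscillating functions. -/
def IsHom (φ : (NNReal → ℝ) → ℝ) : Prop :=
  (∀ f g : NNReal → ℝ, SO f → SO g → ∀ c d : ℝ,
      φ (c • f + d • g) = c * φ f + d * φ g) ∧
  (∀ f g : NNReal → ℝ, SO f → SO g → φ (f ⊔ g) = φ f ⊔ φ g) ∧
  (∀ f g : NNReal → ℝ, SO f → SO g → φ (f ⊓ g) = φ f ⊓ φ g)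

lemma SO_const (c : ℝ) : SO (fun _ => c) := by
  refine ⟨continuous_const, fun R hR ε hε => ⟨1, one_pos, fun x hx => ?_⟩⟩
  have h0 : diam ((fun _ : NNReal => c) '' Icc x (x + R)) ≤ 0 :=
    diam_le_of_forall_dist_le le_rfl (by rintro y ⟨a, -, rfl⟩ z ⟨b, -, rfl⟩; simp)
  linarith

lemma SO_one : SO (1 : NNReal → ℝ) := by simpa [Pi.one_def] using SO_const 1

lemma SO_comb {f g : NNReal → ℝ} (hf : SO f) (hg : SO g) (c d : ℝ) :
    SO (c • f + d • g) := by
  obtain ⟨hfc, hfo⟩ := hf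
  obtain ⟨hgc, hgo⟩ := hg
  refine ⟨(hfc.const_smul c).add (hgc.const_smul d), fun R hR ε hε => ?_⟩
  set ε₁ := ε / (2 * (|c| + |d| + 1)) with hε₁def
  have hε₁pos : 0 < ε₁ := by positivity
  obtain ⟨Mf, hMf, hf'⟩ := hfo R hR ε₁ hε₁pos
  obtain ⟨Mg, hMg, hg'⟩ := hgo R hR ε₁ hε₁pos
  refine ⟨max Mf Mg, lt_of_lt_of_le hMf (le_max_left _ _), fun x hx => ?_⟩
  have hxf := hf' x (lt_of_le_of_lt (le_max_left _ _) hx)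
  have hxg := hg' x (lt_of_le_of_lt (le_max_right _ _) hx)
  have bdf : Bornology.IsBounded (f '' Icc x (x + R)) :=
    (isCompact_Icc.image hfc).isBounded
  have bdg : Bornology.IsBounded (g '' Icc x (x + R)) :=
    (isCompact_Icc.image hgc).isBounded
  refine lt_of_le_of_lt (diam_le_of_forall_dist_le (show (0:ℝ) ≤ ε/2 by positivity) ?_) (by linarith)
  rintro p ⟨a, haI, rfl⟩ q ⟨b, hbI, rfl⟩
  have d1 : dist (f a) (f b) ≤ ε₁ :=
    le_of_lt (lt_of_le_of_lt (dist_le_diam_of_mem bdf ⟨a, haI, rfl⟩ ⟨b, hbI, rfl⟩) hxf)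
  have d2 : dist (g a) (g b) ≤ ε₁ :=
    le_of_lt (lt_of_le_of_lt (dist_le_diam_of_mem bdg ⟨a, haI, rfl⟩ ⟨b, hbI, rfl⟩) hxg)
  have key : (|c| + |d|) * ε₁ ≤ ε / 2 := by
    rw [hε₁def, ← mul_div_assoc]
    rw [div_le_div_iff₀ (by positivity) (by norm_num)]
    nlinarith [abs_nonneg c, abs_nonneg d]
  have hd : dist ((c • f + d • g) a) ((c • f + d • g) b)
      ≤ |c| * dist (f a) (f b) + |d| * dist (g a) (g b) := by
    simp only [Pi.add_apply, Pi.smul_apply, smul_eq_mul, Real.dist_eq]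
    calc |c * f a + d * g a - (c * f b + d * g b)|
        = |c * (f a - f b) + d * (g a - g b)| := by ring_nf
      _ ≤ |c * (f a - f b)| + |d * (g a - g b)| := abs_add_le _ _
      _ = |c| * |f a - f b| + |d| * |g a - g b| := by rw [abs_mul, abs_mul]
  have : |c| * dist (f a) (f b) + |d| * dist (g a) (g b) ≤ (|c| + |d|) * ε₁ := by
    nlinarith [abs_nonneg c, abs_nonneg d, dist_nonneg (x := f a) (y := f b),
      dist_nonneg (x := g a) (y := g b)]
  linarith

lemma SO_sup {f g : NNReal → ℝ} (hf : SO f) (hg : SO g) : SO (f ⊔ g) := by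
  obtain ⟨hfc, hfo⟩ := hf
  obtain ⟨hgc, hgo⟩ := hg
  refine ⟨hfc.max hgc, fun R hR ε hε => ?_⟩
  obtain ⟨Mf, hMf, hf'⟩ := hfo R hR (ε / 2) (by linarith)
  obtain ⟨Mg, hMg, hg'⟩ := hgo R hR (ε / 2) (by linarith)
  refine ⟨max Mf Mg, lt_of_lt_of_le hMf (le_max_left _ _), fun x hx => ?_⟩
  have hxf := hf' x (lt_of_le_of_lt (le_max_left _ _) hx)
  have hxg := hg' x (lt_of_le_of_lt (le_max_right _ _) hx)
  have bdf : Bornology.IsBounded (f '' Icc x (x + R)) :=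
    (isCompact_Icc.image hfc).isBounded
  have bdg : Bornology.IsBounded (g '' Icc x (x + R)) :=
    (isCompact_Icc.image hgc).isBounded
  refine lt_of_le_of_lt (diam_le_of_forall_dist_le (show (0:ℝ) ≤ ε/2 by positivity) ?_) (by linarith)
  rintro p ⟨a, haI, rfl⟩ q ⟨b, hbI, rfl⟩
  have d1 : dist (f a) (f b) ≤ ε / 2 :=
    le_of_lt (lt_of_le_of_lt (dist_le_diam_of_mem bdf ⟨a, haI, rfl⟩ ⟨b, hbI, rfl⟩) hxf)
  have d2 : dist (g a) (g b) ≤ ε / 2 :=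
    le_of_lt (lt_of_le_of_lt (dist_le_diam_of_mem bdg ⟨a, haI, rfl⟩ ⟨b, hbI, rfl⟩) hxg)
  calc dist ((f ⊔ g) a) ((f ⊔ g) b) = |max (f a) (g a) - max (f b) (g b)| := by
        simp [Pi.sup_apply, Real.dist_eq]
    _ ≤ max |f a - f b| |g a - g b| := abs_max_sub_max_le_max _ _ _ _
    _ ≤ ε / 2 := by
        rw [Real.dist_eq] at d1 d2; exact max_le d1 d2

lemma SO_log : SO (fun x : NNReal => Real.log (1 + x)) := by
  refine ⟨(continuous_const.add NNReal.continuous_coe).log (fun x => (add_pos_of_pos_of_nonneg one_pos x.2).ne'),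
    fun R hR ε hε => ?_⟩
  refine ⟨Real.toNNReal ((R : ℝ) / ε) + 1, by positivity, fun x hx => ?_⟩
  have hxR : (R : ℝ) / ε < 1 + (x : ℝ) := by
    have h1 : Real.toNNReal ((R : ℝ) / ε) + 1 ≤ x := hx.le
    have h2 : (R : ℝ) / ε ≤ (Real.toNNReal ((R : ℝ) / ε) : ℝ) := Real.le_coe_toNNReal _
    have h3 : ((Real.toNNReal ((R : ℝ) / ε) + 1 : NNReal) : ℝ) ≤ (x : ℝ) :=
      NNReal.coe_le_coe.2 h1
    push_cast at h3
    linarith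
  have hbound : ∀ a ∈ Icc x (x + R), ∀ b ∈ Icc x (x + R), a ≤ b →
      Real.log (1 + (b : ℝ)) - Real.log (1 + (a : ℝ)) ≤ (R : ℝ) / (1 + x) := by
    intro a ha b hb hab
    have ha1 : (0 : ℝ) < 1 + a := by positivity
    have hb1 : (0 : ℝ) < 1 + b := by positivity
    have hax : (x : ℝ) ≤ a := NNReal.coe_le_coe.2 ha.1
    have hbx : (b : ℝ) ≤ (x : ℝ) + R := by
      have := hb.2; exact_mod_cast NNReal.coe_le_coe.2 this
    have hab' : (a : ℝ) ≤ b := NNReal.coe_le_coe.2 hab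
    have hlog : Real.log (1 + (b : ℝ)) - Real.log (1 + (a : ℝ))
        = Real.log ((1 + b) / (1 + a)) := (Real.log_div hb1.ne' ha1.ne').symm
    rw [hlog]
    have h1 : Real.log ((1 + (b : ℝ)) / (1 + a)) ≤ (1 + b) / (1 + a) - 1 :=
      Real.log_le_sub_one_of_pos (by positivity)
    have h2 : (1 + (b : ℝ)) / (1 + a) - 1 = ((b : ℝ) - a) / (1 + a) := by
      field_simp
      ring
    have h3 : ((b : ℝ) - a) / (1 + a) ≤ (R : ℝ) / (1 + x) :=
      div_le_div₀ (by positivity) (by linarith) (by positivity) (by linarith)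
    linarith
  have hRx : (R : ℝ) / (1 + x) < ε := by
    rw [div_lt_iff₀ (by positivity)]
    rw [div_lt_iff₀ hε] at hxR
    linarith
  refine lt_of_le_of_lt (diam_le_of_forall_dist_le (by positivity) ?_) hRx
  rintro p ⟨a, haI, rfl⟩ q ⟨b, hbI, rfl⟩
  rcases le_total a b with hab | hba
  · rw [Real.dist_eq, abs_sub_comm, abs_of_nonneg]
    · exact hbound a haI b hbI hab
    · have := Real.log_le_log (by positivity : (0:ℝ) < 1 + a)
        (by have := NNReal.coe_le_coe.2 hab; linarith : (1:ℝ) + a ≤ 1 + b)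
      linarith
  · rw [Real.dist_eq, abs_of_nonneg]
    · exact hbound b hbI a haI hba
    · have := Real.log_le_log (by positivity : (0:ℝ) < 1 + b)
        (by have := NNReal.coe_le_coe.2 hba; linarith : (1:ℝ) + b ≤ 1 + a)
      linarith

theorem stmt_5 (φ : (NNReal → ℝ) → ℝ) (hφ : IsHom φ) :
    0 < φ 1 ↔ ∃ (x : NNReal) (c : ℝ), 0 < c ∧ ∀ f : NNReal → ℝ, SO f → φ f = c * f x := by
  constructor
  · intro ha
    have h1 : SO (1 : NNReal → ℝ) := SO_one
    have hcsmul : ∀ c : ℝ, φ (c • (1 : NNReal → ℝ)) = c * φ 1 := by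
      intro c
      have := hφ.1 1 1 h1 h1 c 0
      simpa using this
    set a := φ 1 with hadef
    set L : NNReal → ℝ := fun x => Real.log (1 + x) with hLdef
    have hL : SO L := SO_log
    have hzeroSO : SO (0 : NNReal → ℝ) := by simpa [Pi.zero_def] using SO_const 0
    have hφ0 : φ (0 : NNReal → ℝ) = 0 := by
      have := hφ.1 1 1 h1 h1 0 0
      simpa using this
    have hLnonneg : 0 ≤ φ L := by
      have hsup := hφ.2.1 L 0 hL hzeroSO
      have hLsup : L ⊔ (0 : NNReal → ℝ) = L := by
        funext x
        exact sup_eq_left.2 (Real.log_nonneg (by simp))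
      rw [hLsup, hφ0] at hsup
      calc (0 : ℝ) ≤ φ L ⊔ 0 := le_sup_right
        _ = φ L := hsup.symm
    set t := φ L / a with htdef
    have ht0 : 0 ≤ t := div_nonneg hLnonneg ha.le
    have hta : t * a = φ L := div_mul_cancel₀ _ (ne_of_gt ha)
    set x₀ : NNReal := Real.toNNReal (Real.exp t - 1) with hx₀def
    have hx₀ : (x₀ : ℝ) = Real.exp t - 1 :=
      Real.coe_toNNReal _ (by nlinarith [Real.one_le_exp ht0])
    have hLx₀ : L x₀ = t := by
      rw [hLdef]
      show Real.log (1 + (x₀ : ℝ)) = t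
      rw [hx₀, show (1 : ℝ) + (Real.exp t - 1) = Real.exp t by ring, Real.log_exp]
    have hmono : ∀ g : NNReal → ℝ, SO g → ∀ m : ℝ, (∀ x, m ≤ g x) → m * a ≤ φ g := by
      intro g hg m hm
      have hmSO : SO (m • (1 : NNReal → ℝ)) := by
        have : (m • (1 : NNReal → ℝ)) = fun _ => m := by funext x; simp
        rw [this]; exact SO_const m
      have hinf := hφ.2.2 g (m • 1) hg hmSO
      have heq : g ⊓ (m • (1 : NNReal → ℝ)) = m • 1 := by
        funext x
        exact inf_eq_right.2 (by simpa using hm x)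
      rw [heq, hcsmul] at hinf
      exact inf_eq_right.1 hinf.symm
    refine ⟨x₀, a, ha, ?_⟩
    intro f hf
    set s := φ f / a with hsdef
    have hsa : s * a = φ f := div_mul_cancel₀ _ (ne_of_gt ha)
    -- build k = |f - s| and h = |L - t| as SO functions with φ = 0
    set u : NNReal → ℝ := (1 : ℝ) • f + (-s) • 1 with hudef
    have huSO : SO u := SO_comb hf h1 1 (-s)
    have hφu : φ u = 0 := by
      have := hφ.1 f 1 hf h1 1 (-s)
      rw [← hudef] at this
      rw [this]; linarith
    set nu : NNReal → ℝ := (-1 : ℝ) • u + (0 : ℝ) • u with hnudef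
    have hnuSO : SO nu := SO_comb huSO huSO (-1) 0
    have hφnu : φ nu = 0 := by
      have := hφ.1 u u huSO huSO (-1) 0
      rw [← hnudef] at this
      rw [this, hφu]; ring
    set k : NNReal → ℝ := u ⊔ nu with hkdef
    have hkSO : SO k := SO_sup huSO hnuSO
    have hφk : φ k = 0 := by
      have := hφ.2.1 u nu huSO hnuSO
      rw [← hkdef] at this
      rw [this, hφu, hφnu]; simp
    have hkval : ∀ x, k x = |f x - s| := by
      intro x
      have : k x = max (f x - s) (-(f x - s)) := by
        simp only [hkdef, hnudef, hudef, Pi.sup_apply, Pi.add_apply, Pi.smul_apply,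
          Pi.one_apply, smul_eq_mul]
        ring_nf
      rw [this, ← abs_eq_max_neg]
    set v : NNReal → ℝ := (1 : ℝ) • L + (-t) • 1 with hvdef
    have hvSO : SO v := SO_comb hL h1 1 (-t)
    have hφv : φ v = 0 := by
      have := hφ.1 L 1 hL h1 1 (-t)
      rw [← hvdef] at this
      rw [this]; linarith
    set nv : NNReal → ℝ := (-1 : ℝ) • v + (0 : ℝ) • v with hnvdef
    have hnvSO : SO nv := SO_comb hvSO hvSO (-1) 0
    have hφnv : φ nv = 0 := by
      have := hφ.1 v v hvSO hvSO (-1) 0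
      rw [← hnvdef] at this
      rw [this, hφv]; ring
    set h : NNReal → ℝ := v ⊔ nv with hhdef
    have hhSO : SO h := SO_sup hvSO hnvSO
    have hφh : φ h = 0 := by
      have := hφ.2.1 v nv hvSO hnvSO
      rw [← hhdef] at this
      rw [this, hφv, hφnv]; simp
    have hhval : ∀ x, h x = |L x - t| := by
      intro x
      have : h x = max (L x - t) (-(L x - t)) := by
        simp only [hhdef, hnvdef, hvdef, Pi.sup_apply, Pi.add_apply, Pi.smul_apply,
          Pi.one_apply, smul_eq_mul]
        ring_nf
      rw [this, ← abs_eq_max_neg]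
    set g : NNReal → ℝ := (1 : ℝ) • k + (1 : ℝ) • h with hgdef
    have hgSO : SO g := SO_comb hkSO hhSO 1 1
    have hφg : φ g = 0 := by
      have := hφ.1 k h hkSO hhSO 1 1
      rw [← hgdef] at this
      rw [this, hφk, hφh]; ring
    have hgval : ∀ x, g x = |f x - s| + |L x - t| := by
      intro x
      simp only [hgdef, Pi.add_apply, Pi.smul_apply, smul_eq_mul, one_mul]
      rw [hkval, hhval]
    have hfs : f x₀ = s := by
      by_contra hne
      have hgx₀ : 0 < g x₀ := by
        rw [hgval x₀, hLx₀, sub_self, abs_zero, add_zero]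
        exact abs_pos.2 (sub_ne_zero.2 hne)
      have hgpos : ∀ x, 0 < g x := by
        intro x
        rcases eq_or_ne x x₀ with rfl | hx
        · exact hgx₀
        · rw [hgval]
          have hLne : L x ≠ t := by
            rw [← hLx₀]
            intro hEq
            apply hx
            have h1x : (0 : ℝ) < 1 + x := by positivity
            have h1x₀ : (0 : ℝ) < 1 + x₀ := by positivity
            have : (1 : ℝ) + x = 1 + x₀ := by
              have := congrArg Real.exp hEq
              rwa [hLdef, Real.exp_log h1x, Real.exp_log h1x₀] at this
            exact NNReal.coe_injective (by linarith)
          have := abs_pos.2 (sub_ne_zero.2 hLne)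
          linarith [abs_nonneg (f x - s)]
      set K : NNReal := Real.toNNReal (Real.exp (t + 1)) with hKdef
      have hK : (K : ℝ) = Real.exp (t + 1) := Real.coe_toNNReal _ (Real.exp_pos _).le
      have hcpt : IsCompact (Icc (0 : NNReal) K) := isCompact_Icc
      have hne' : (Icc (0 : NNReal) K).Nonempty := ⟨0, by simp⟩
      obtain ⟨z, hz, hzmin⟩ := hcpt.exists_isMinOn hne' hgSO.1.continuousOn
      set m := min (g z) 1 with hmdef
      have hm : 0 < m := lt_min (hgpos z) one_pos
      have hmle : ∀ x, m ≤ g x := by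
        intro x
        rcases le_total x K with hxK | hKx
        · exact le_trans (min_le_left _ _) (hzmin ⟨(zero_le : (0 : NNReal) ≤ x), hxK⟩)
        · refine le_trans (min_le_right _ _) ?_
          have h1x : Real.exp (t + 1) ≤ 1 + (x : ℝ) := by
            have hKx' : (K : ℝ) ≤ x := NNReal.coe_le_coe.2 hKx
            rw [hK] at hKx'
            linarith
          have hLx : t + 1 ≤ L x := by
            have := Real.log_le_log (Real.exp_pos _) h1x
            rwa [Real.log_exp] at this
          rw [hgval]
          have h1' : 1 ≤ |L x - t| := le_trans (by linarith) (le_abs_self _)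
          linarith [abs_nonneg (f x - s)]
      have := hmono g hgSO m hmle
      rw [hφg] at this
      nlinarith
    rw [← hsa, hfs]; ring
  · rintro ⟨x, c, hc, hev⟩
    rw [hev 1 SO_one]
    simpa using hc
end
end

section
/- For every slowly oscillating continuous function f : [0,∞) → ℝ, there exist a strictly increasing sequence a of natural numbers and a constant L > 0 such that |f(x)| ≤ L · η_a(x) for all x ∈ [0,∞). -/
open Filter Metric Set

noncomputable section

/-- The approximating functions `η_a^n`: `η_a^0 (x) = x + 1`, and
`η_a^{n+1}` agrees with `η_a^n` below `a (n+1)` and grows with slope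
`1/(n+1)` above it. -/
noncomputable def etaAux (a : ℕ → ℕ) : ℕ → NNReal → ℝ
  | 0 => fun x => (x : ℝ) + 1
  | n + 1 => fun x =>
      if x < (a (n + 1) : NNReal) then etaAux a n x
      else etaAux a n (a (n + 1) : NNReal) + ((x : ℝ) - (a (n + 1) : ℝ)) / (n + 1)

/-- The slowly oscillating function `η_a` associated to a strictly increasing
sequence `a`, the pointwise limit (infimum) of the decreasing sequence `η_a^n`. -/
noncomputable def eta (a : ℕ → ℕ) (x : NNReal) : ℝ := ⨅ n, etaAux a n x

lemma etaAux_lowerLip (a : ℕ → ℕ) : ∀ (n : ℕ) (y x : NNReal), y ≤ x →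
    ((x:ℝ) - y)/((n:ℝ)+1) ≤ etaAux a n x - etaAux a n y := by
  intro n
  induction n with
  | zero => intro y x h; simp [etaAux]
  | succ n ih =>
    intro y x h
    have hyx : (y:ℝ) ≤ x := h
    have hpos : (0:ℝ) < (n:ℝ) + 1 := by positivity
    have hkey : ((x:ℝ) - y)/((n:ℝ)+1+1) ≤ ((x:ℝ) - y)/((n:ℝ)+1) := by
      gcongr
      · linarith
    by_cases hx : x < (a (n+1) : NNReal)
    · have hy : y < (a (n+1) : NNReal) := lt_of_le_of_lt h hx
      simp only [etaAux, if_pos hx, if_pos hy]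
      have h1 := ih y x h
      push_cast at h1 hkey ⊢
      linarith
    · have hax : ((a (n+1) : ℕ) : NNReal) ≤ x := not_lt.1 hx
      have haxR : ((a (n+1) : ℕ) : ℝ) ≤ (x:ℝ) := hax
      by_cases hy : y < (a (n+1) : NNReal)
      · have hya : y ≤ ((a (n+1) : ℕ) : NNReal) := le_of_lt hy
        have h1 := ih y _ hya
        simp only [etaAux, if_neg hx, if_pos hy]
        push_cast at h1 hkey ⊢
        have : (0:ℝ) ≤ ((x:ℝ) - (a (n+1) : ℕ)) / ((n:ℝ)+1) := by
          apply div_nonneg <;> linarith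
        have e1 : ((a (n+1):ℕ):ℝ) - (y:ℝ) ≥ 0 := by
          have : (y:ℝ) ≤ ((a (n+1):ℕ):ℝ) := hya
          linarith
        have h2 : ((x:ℝ) - y)/((n:ℝ)+1) =
            (((a (n+1):ℕ):ℝ) - y)/((n:ℝ)+1) + ((x:ℝ) - (a (n+1):ℕ))/((n:ℝ)+1) := by
          field_simp
          ring
        linarith
      · have hayR : ((a (n+1) : ℕ) : ℝ) ≤ (y:ℝ) := not_lt.1 hy
        simp only [etaAux, if_neg hx, if_neg hy]
        push_cast at hkey ⊢
        have h2 : ((x:ℝ) - y)/((n:ℝ)+1) =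
            ((x:ℝ) - (a (n+1):ℕ))/((n:ℝ)+1) - ((y:ℝ) - (a (n+1):ℕ))/((n:ℝ)+1) := by
          field_simp
          ring
        linarith

lemma etaAux_mono (a : ℕ → ℕ) (n : ℕ) {y x : NNReal} (h : y ≤ x) :
    etaAux a n y ≤ etaAux a n x := by
  have h1 := etaAux_lowerLip a n y x h
  have h2 : (0:ℝ) ≤ ((x:ℝ) - y)/((n:ℝ)+1) := by
    apply div_nonneg
    · have : (y:ℝ) ≤ x := h
      linarith
    · positivity
  linarith

lemma etaAux_ge_one (a : ℕ → ℕ) : ∀ (n : ℕ) (x : NNReal), 1 ≤ etaAux a n x := by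
  intro n
  induction n with
  | zero => intro x; simp only [etaAux]; linarith [x.coe_nonneg]
  | succ n ih =>
    intro x
    by_cases hx : x < (a (n+1) : NNReal)
    · simp only [etaAux, if_pos hx]; exact ih x
    · simp only [etaAux, if_neg hx]
      have hax : ((a (n+1):ℕ):ℝ) ≤ (x:ℝ) := not_lt.1 hx
      have h1 := ih ((a (n+1):ℕ) : NNReal)
      have : (0:ℝ) ≤ ((x:ℝ) - (a (n+1):ℕ)) / ((n:ℝ)+1) := by
        apply div_nonneg <;> [linarith; positivity]
      linarith

lemma etaAux_succ_le (a : ℕ → ℕ) (n : ℕ) (x : NNReal) :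
    etaAux a (n+1) x ≤ etaAux a n x := by
  by_cases hx : x < (a (n+1) : NNReal)
  · simp only [etaAux, if_pos hx]; exact le_rfl
  · simp only [etaAux, if_neg hx]
    have h1 := etaAux_lowerLip a n _ x (not_lt.1 hx)
    push_cast at h1 ⊢
    linarith

lemma etaAux_antitone (a : ℕ → ℕ) (x : NNReal) : Antitone (fun n => etaAux a n x) :=
  antitone_nat_of_succ_le (fun n => etaAux_succ_le a n x)

lemma etaAux_stable (a : ℕ → ℕ) (ha : StrictMono a) {n : ℕ} {x : NNReal}
    (hx : x < (a (n+1) : NNReal)) : ∀ m, n ≤ m → etaAux a m x = etaAux a n x := by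
  intro m hm
  induction m, hm using Nat.le_induction with
  | base => rfl
  | succ m hm ih =>
    have hle : a (n+1) ≤ a (m+1) := ha.monotone (by omega)
    have hx' : x < (a (m+1) : NNReal) :=
      lt_of_lt_of_le hx (by exact_mod_cast Nat.cast_le.2 hle)
    simp only [etaAux, if_pos hx']
    exact ih

lemma le_eta (a : ℕ → ℕ) (ha : StrictMono a) {n : ℕ} {x : NNReal}
    (hx : x < (a (n+1) : NNReal)) : etaAux a n x ≤ eta a x := by
  apply le_ciInf
  intro m
  rcases le_total n m with h | h
  · exact (etaAux_stable a ha hx m h).ge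
  · exact etaAux_antitone a x h

lemma chain (f : NNReal → ℝ) (hc : Continuous f) {M : NNReal} {ε : ℝ}
    (hM : ∀ x : NNReal, M < x → Metric.diam (f '' Set.Icc x (x+1)) < ε) :
    ∀ (k : ℕ) (y x : NNReal), M < y → y ≤ x → (x:ℝ) ≤ (y:ℝ) + k + 1 →
      |f x - f y| ≤ ((k:ℝ)+1) * ε := by
  intro k
  induction k with
  | zero =>
    intro y x hy hyx hxk
    have hx1 : x ≤ y + 1 := by
      rw [← NNReal.coe_le_coe]
      push_cast at hxk ⊢
      linarith
    have hb : Bornology.IsBounded (f '' Set.Icc y (y+1)) :=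
      (isCompact_Icc.image hc).isBounded
    have hd := Metric.dist_le_diam_of_mem hb
      (Set.mem_image_of_mem f ⟨hyx, hx1⟩)
      (Set.mem_image_of_mem f ⟨le_refl y, le_self_add⟩)
    rw [Real.dist_eq] at hd
    have := hM y hy
    push_cast
    linarith
  | succ k ih =>
    intro y x hy hyx hxk
    have hε : 0 ≤ ε := le_of_lt (lt_of_le_of_lt Metric.diam_nonneg (hM y hy))
    by_cases hx : (x:ℝ) ≤ (y:ℝ) + k + 1
    · have := ih y x hy hyx hx
      push_cast at this ⊢
      nlinarith
    · push_neg at hx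
      set z : NNReal := y + (k:NNReal) + 1 with hz
      have hzR : (z:ℝ) = (y:ℝ) + k + 1 := by rw [hz]; push_cast; ring
      have hyz : y ≤ z := by
        rw [← NNReal.coe_le_coe, hzR]
        have hk0 : (0:ℝ) ≤ (k:ℕ) := Nat.cast_nonneg k
        linarith
      have hMz : M < z := lt_of_lt_of_le hy hyz
      have hzx : z ≤ x := by
        rw [← NNReal.coe_le_coe, hzR]; linarith
      have hx1 : x ≤ z + 1 := by
        rw [← NNReal.coe_le_coe]
        push_cast [hzR]
        push_cast at hxk
        linarith
      have hb : Bornology.IsBounded (f '' Set.Icc z (z+1)) :=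
        (isCompact_Icc.image hc).isBounded
      have hd := Metric.dist_le_diam_of_mem hb
        (Set.mem_image_of_mem f ⟨hzx, hx1⟩)
        (Set.mem_image_of_mem f ⟨le_refl z, le_self_add⟩)
      rw [Real.dist_eq] at hd
      have h2 := hM z hMz
      have h3 := ih y z hy hyz (le_of_eq hzR)
      have habs : |f x - f y| ≤ |f x - f z| + |f z - f y| := abs_sub_le _ _ _
      push_cast at h3 ⊢
      nlinarith

lemma chain' (f : NNReal → ℝ) (hc : Continuous f) {M : NNReal} {ε : ℝ}
    (hM : ∀ x : NNReal, M < x → Metric.diam (f '' Set.Icc x (x+1)) < ε)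
    {y x : NNReal} (hy : M < y) (hyx : y ≤ x) :
    |f x - f y| ≤ ((x:ℝ) - y + 2) * ε := by
  have hε : 0 ≤ ε := le_of_lt (lt_of_le_of_lt Metric.diam_nonneg (hM y hy))
  set k : ℕ := ⌈(x:ℝ) - y⌉₊ with hk
  have h0 : (0:ℝ) ≤ (x:ℝ) - y := by
    have : (y:ℝ) ≤ x := hyx
    linarith
  have h1 : (x:ℝ) - y ≤ k := Nat.le_ceil _
  have h2 : (k:ℝ) ≤ (x:ℝ) - y + 1 := by
    have := Nat.ceil_lt_add_one h0
    linarith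
  have := chain f hc hM k y x hy hyx (by linarith)
  nlinarith

lemma keyineq {L d t : ℝ} (hL : 3 ≤ L) (hd : 0 ≤ d) (ht : 0 < t) (ht1 : t ≤ 1) :
    (d + 2) * t ≤ 2 + L * (d * t) := by
  have hdt : 0 ≤ d * t := mul_nonneg hd ht.le
  have h1 : d * t ≤ L * (d * t) := le_mul_of_one_le_left hdt (by linarith)
  nlinarith

lemma keyineq2 {L d t : ℝ} (hL : 3 ≤ L) (hd : 1 ≤ d) (ht : 0 < t) :
    (d + 2) * t ≤ L * (d * t) := by
  have h1 : d + 2 ≤ L * d := by nlinarith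
  calc (d + 2) * t ≤ (L * d) * t := mul_le_mul_of_nonneg_right h1 ht.le
    _ = L * (d * t) := by ring

theorem stmt_9 (f : NNReal → ℝ) (hf : SO f) :
    ∃ a : ℕ → ℕ, StrictMono a ∧ ∃ L : ℝ, 0 < L ∧ ∀ x, |f x| ≤ L * eta a x := by
  obtain ⟨hc, hso⟩ := hf
  have hM : ∀ n : ℕ, ∃ M : NNReal, 0 < M ∧ ∀ x, M < x →
      Metric.diam (f '' Set.Icc x (x+1)) < 1/((n:ℝ)+1) := fun n =>
    hso 1 one_pos _ (by positivity)
  choose M _ hMd using hM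
  obtain ⟨a, ha0, ha_succ⟩ : ∃ a : ℕ → ℕ, a 0 = 0 ∧
      ∀ n, a (n+1) = max (a n) ⌈M n⌉₊ + 1 :=
    ⟨fun n => Nat.rec 0 (fun k ak => max ak ⌈M k⌉₊ + 1) n, rfl, fun n => rfl⟩
  have haSM : StrictMono a := strictMono_nat_of_lt_succ (by
    intro n; rw [ha_succ]; omega)
  have haM : ∀ n, M n < ((a (n+1) : ℕ) : NNReal) := by
    intro n
    have h1 : M n ≤ (⌈M n⌉₊ : NNReal) := Nat.le_ceil _
    have h2 : (⌈M n⌉₊ : ℕ) < a (n+1) := by rw [ha_succ]; omega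
    exact lt_of_le_of_lt h1 (by exact_mod_cast h2)
  obtain ⟨C, hC⟩ := (isCompact_Icc (a := (0:NNReal))
    (b := ((a 1 : ℕ):NNReal))).exists_bound_of_continuousOn hc.continuousOn
  simp only [Real.norm_eq_abs] at hC
  have hC0 : 0 ≤ C := le_trans (abs_nonneg _) (hC 0 ⟨le_rfl, zero_le⟩)
  set L : ℝ := max 3 (C + 2) with hLdef
  have hL3 : (3:ℝ) ≤ L := le_max_left _ _
  have hLC : C + 2 ≤ L := le_max_right _ _
  have hL : (0:ℝ) < L := lt_of_lt_of_le (by norm_num) hL3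
  -- key inductive bound at the nodes
  have hA : ∀ n, |f ((a (n+1) : ℕ) : NNReal)| + 2 ≤
      L * etaAux a n ((a (n+1) : ℕ) : NNReal) := by
    intro n
    induction n with
    | zero =>
      show |f ((a 1 : ℕ) : NNReal)| + 2 ≤ L * etaAux a 0 ((a 1 : ℕ) : NNReal)
      have he : etaAux a 0 ((a 1 : ℕ) : NNReal) = (a 1 : ℝ) + 1 := by
        simp [etaAux]
      have hfb : |f ((a 1 : ℕ) : NNReal)| ≤ C := hC _ ⟨zero_le, le_rfl⟩
      have h1 : (0:ℝ) ≤ (a 1 : ℝ) := Nat.cast_nonneg _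
      rw [he]
      nlinarith
    | succ n ihn =>
      show |f ((a (n+2) : ℕ) : NNReal)| + 2 ≤ L * etaAux a (n+1) ((a (n+2) : ℕ) : NNReal)
      have hle : a (n+1) ≤ a (n+2) := le_of_lt (haSM (Nat.lt_succ_self (n+1)))
      have hleN : ((a (n+1):ℕ):NNReal) ≤ ((a (n+2):ℕ):NNReal) := by
        exact_mod_cast hle
      have hnotlt : ¬ ((a (n+2):ℕ):NNReal) < ((a (n+1):ℕ):NNReal) := not_lt.2 hleN
      have he : etaAux a (n+1) ((a (n+2):ℕ):NNReal) =
          etaAux a n ((a (n+1):ℕ):NNReal) +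
            ((a (n+2):ℝ) - (a (n+1):ℝ)) / ((n:ℝ)+1) := by
        simp only [etaAux, if_neg hnotlt]
        all_goals (push_cast; ring)
      have hfchain := chain' f hc (hMd n) (haM n) hleN
      have hd1 : (1:ℝ) ≤ (a (n+2):ℝ) - (a (n+1):ℝ) := by
        have h'' : a (n+1) + 1 ≤ a (n+2) := haSM (Nat.lt_succ_self (n+1))
        have h' : ((a (n+1):ℕ):ℝ) + 1 ≤ ((a (n+2):ℕ):ℝ) := by exact_mod_cast h''
        linarith
      set c := etaAux a n ((a (n+1):ℕ):NNReal) with hcdef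
      set d := (a (n+2):ℝ) - (a (n+1):ℝ) with hddef
      have ht0 : (0:ℝ) < 1/((n:ℝ)+1) := by positivity
      have ht1 : 1/((n:ℝ)+1) ≤ 1 := by
        rw [div_le_one (by positivity)]
        linarith [Nat.cast_nonneg (α := ℝ) n]
      rw [he]
      have hfc : |f ((a (n+2):ℕ):NNReal)| ≤
          |f ((a (n+1):ℕ):NNReal)| + (d + 2) * (1/((n:ℝ)+1)) := by
        have habs : |f ((a (n+2):ℕ):NNReal)| - |f ((a (n+1):ℕ):NNReal)| ≤
            |f ((a (n+2):ℕ):NNReal) - f ((a (n+1):ℕ):NNReal)| :=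
          abs_sub_abs_le_abs_sub _ _
        have hcast : ((((a (n+2):ℕ)):NNReal):ℝ) - (((a (n+1):ℕ):NNReal):ℝ) = d := by
          rw [hddef]; norm_cast
        rw [hcast] at hfchain
        have hrw2 : (d + 2) * (1/((n:ℝ)+1)) = (d + 2) * (1/((n:ℝ)+1)) := rfl
        linarith
      have hkey : (d + 2) * (1/((n:ℝ)+1)) ≤ L * (d * (1/((n:ℝ)+1))) :=
        keyineq2 hL3 hd1 ht0
      have hrw : d / ((n:ℝ)+1) = d * (1/((n:ℝ)+1)) := by ring
      rw [hrw]
      have hexpand : L * (c + d * (1/((n:ℝ)+1))) =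
          L * c + L * (d * (1/((n:ℝ)+1))) := by ring
      linarith
  -- now the pointwise bound
  refine ⟨a, haSM, L, hL, ?_⟩
  intro x
  have hex : ∃ m, x < ((a (m+1) : ℕ) : NNReal) := by
    refine ⟨⌈x⌉₊, ?_⟩
    have h1 : (⌈x⌉₊ + 1 : ℕ) ≤ a (⌈x⌉₊ + 1) := haSM.le_apply
    have h2 : x ≤ (⌈x⌉₊ : NNReal) := Nat.le_ceil _
    have h3 : ((⌈x⌉₊ : ℕ) : NNReal) < ((⌈x⌉₊ + 1 : ℕ) : NNReal) := by
      exact_mod_cast Nat.lt_succ_self _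
    exact lt_of_le_of_lt h2 (lt_of_lt_of_le h3 (by exact_mod_cast h1))
  obtain ⟨n, hlt, hmin⟩ : ∃ n, x < ((a (n+1):ℕ):NNReal) ∧
      ∀ m < n, ¬ x < ((a (m+1):ℕ):NNReal) :=
    ⟨Nat.find hex, Nat.find_spec hex, fun m hm => Nat.find_min hex hm⟩
  have heta : etaAux a n x ≤ eta a x := le_eta a haSM hlt
  have hsuff : |f x| ≤ L * etaAux a n x → |f x| ≤ L * eta a x := by
    intro h
    exact le_trans h (mul_le_mul_of_nonneg_left heta (le_of_lt hL))
  apply hsuff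
  cases n with
  | zero =>
    have hx1 : x ≤ ((a 1 : ℕ) : NNReal) := le_of_lt hlt
    have hfb : |f x| ≤ C := hC x ⟨zero_le, hx1⟩
    have he : etaAux a 0 x = (x:ℝ) + 1 := by simp [etaAux]
    rw [he]
    have hxn := x.coe_nonneg
    nlinarith
  | succ m =>
    have hax : ((a (m+1):ℕ):NNReal) ≤ x := not_lt.1 (hmin m (Nat.lt_succ_self m))
    have hnotlt : ¬ x < ((a (m+1):ℕ):NNReal) := not_lt.2 hax
    have he : etaAux a (m+1) x =
        etaAux a m ((a (m+1):ℕ):NNReal) + ((x:ℝ) - (a (m+1):ℝ)) / ((m:ℝ)+1) := by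
      simp only [etaAux, if_neg hnotlt]
      all_goals (push_cast; ring)
    have hfchain := chain' f hc (hMd m) (haM m) hax
    set c := etaAux a m ((a (m+1):ℕ):NNReal) with hcdef
    set d := (x:ℝ) - (a (m+1):ℝ) with hddef
    have hd0 : (0:ℝ) ≤ d := by
      have h' : (((a (m+1):ℕ):NNReal):ℝ) ≤ (x:ℝ) := hax
      rw [hddef]
      have h'' : (((a (m+1):ℕ):NNReal):ℝ) = ((a (m+1):ℕ):ℝ) := by norm_cast
      linarith [h''.symm.trans_le h']
    have ht0 : (0:ℝ) < 1/((m:ℝ)+1) := by positivity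
    have ht1 : 1/((m:ℝ)+1) ≤ 1 := by
      rw [div_le_one (by positivity)]
      linarith [Nat.cast_nonneg (α := ℝ) m]
    have hAm := hA m
    rw [← hcdef] at hAm
    have hfc : |f x| ≤ |f ((a (m+1):ℕ):NNReal)| + (d + 2) * (1/((m:ℝ)+1)) := by
      have habs : |f x| - |f ((a (m+1):ℕ):NNReal)| ≤
          |f x - f ((a (m+1):ℕ):NNReal)| := abs_sub_abs_le_abs_sub _ _
      have hcast : (x:ℝ) - (((a (m+1):ℕ):NNReal):ℝ) = d := by
        rw [hddef]; norm_cast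
      rw [hcast] at hfchain
      linarith
    rw [he]
    have hrw : d / ((m:ℝ)+1) = d * (1/((m:ℝ)+1)) := by ring
    rw [hrw]
    have hkey : (d + 2) * (1/((m:ℝ)+1)) ≤ 2 + L * (d * (1/((m:ℝ)+1))) :=
      keyineq hL3 hd0 ht0 ht1
    have hexpand : L * (c + d * (1/((m:ℝ)+1))) =
        L * c + L * (d * (1/((m:ℝ)+1))) := by ring
    linarith
end
end
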